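/- Let A be an n×m real matrix, b ∈ ℝ^n, p ∈ [1,∞), Z = min_{x∈ℝ^m} ‖Ax − b‖_p, and 0 < ε ≤ 1/7. Let T be a real matrix with n columns such that (1−ε)·‖Ax‖_p ≤ ‖TAx‖_p ≤ (1+ε)·‖Ax‖_p for all x ∈ ℝ^m. Let x̂_c, x̂_opt ∈ ℝ^m with ‖Ax̂_opt − Ax̂_c‖_p ≤ 12Z, and let N be a set of points of the form Ax_ε with ‖Ax_ε − Ax̂_c‖_p ≤ 12Z such that: (i) there exists Ax*_ε ∈ N with ‖Ax̂_opt − Ax*_ε‖_p ≤ εZ, and (ii) for every Ax_ε ∈ N, if ‖T(Ax_ε − b)‖_p ≤ (1+3ε)Z then ‖Ax_ε − b‖_p ≤ (1+6ε)Z. If ‖T(Ax̂_opt − b)‖_p ≤ (1+ε)Z, then ‖Ax̂_opt − b‖_p ≤ (1+7ε)Z. -/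

import Mathlib

open scoped BigOperators

/-- The entrywise `p`-norm of a vector: `(∑ i, |v i| ^ p) ^ (1/p)`. -/
noncomputable def pnorm (p : ℝ) {n : ℕ} (v : Fin n → ℝ) : ℝ :=
  (∑ i, |v i| ^ p) ^ (1 / p)

/-- The dual norm of the `p`-norm: the max-norm if `p = 1`, else the `p/(p-1)`-norm. -/
noncomputable def qnorm (p : ℝ) {n : ℕ} (v : Fin n → ℝ) : ℝ :=
  if p = 1 then ⨆ i, |v i| else pnorm (p / (p - 1)) v

/-- The entrywise `p`-norm of a matrix. -/
noncomputable def mpnorm (p : ℝ) {n d : ℕ} (M : Matrix (Fin n) (Fin d) ℝ) : ℝ :=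
  (∑ i, ∑ j, |M i j| ^ p) ^ (1 / p)

/-- `U` is an `(α, β, p)`-well-conditioned basis for the column space of `A`. -/
def IsWCB (p α β : ℝ) {n m d : ℕ} (A : Matrix (Fin n) (Fin m) ℝ)
    (U : Matrix (Fin n) (Fin d) ℝ) : Prop :=
  LinearMap.range U.mulVecLin = LinearMap.range A.mulVecLin ∧
  mpnorm p U ≤ α ∧
  ∀ z : Fin d → ℝ, qnorm p z ≤ β * pnorm p (U.mulVec z)

/-- `S : Ω → Matrix` is a random `n × n` diagonal sampling matrix with probabilities `pr`:
its diagonal entries are mutually independent, with `S ω i i = (pr i) ^ (-1/p)` with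
probability `pr i` and `S ω i i = 0` with probability `1 - pr i`. -/
structure IsSamplingMatrix {Ω : Type} [MeasurableSpace Ω] (μ : MeasureTheory.Measure Ω)
    (p : ℝ) {n : ℕ} (pr : Fin n → ℝ) (S : Ω → Matrix (Fin n) (Fin n) ℝ) : Prop where
  offdiag : ∀ ω i j, i ≠ j → S ω i j = 0
  meas : ∀ i, Measurable fun ω => S ω i i
  prob_val : ∀ i, μ {ω | S ω i i = (pr i) ^ (-(1 / p))} = ENNReal.ofReal (pr i)
  prob_zero : ∀ i, μ {ω | S ω i i = 0} = ENNReal.ofReal (1 - pr i)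
  indep : ProbabilityTheory.iIndepFun (fun i ω => S ω i i) μ

/-! The net point `A x_ε` within `εZ` of `A x̂_opt` carries the argument: as `T` distorts norms
on the column space of `A` by at most `1 + ε`, `‖T (A x_ε - b)‖_p ≤ (1 + ε) Z + (1 + ε) ε Z`,
which is at most `(1 + 3ε) Z` because `ε ≤ 1`. The net property then gives
`‖A x_ε - b‖_p ≤ (1 + 6ε) Z`, and the triangle inequality adds back `εZ`. -/

lemma pnorm_nonneg (p : ℝ) {n : ℕ} (v : Fin n → ℝ) : 0 ≤ pnorm p v :=
  Real.rpow_nonneg (Finset.sum_nonneg fun _ _ => Real.rpow_nonneg (abs_nonneg _) _) _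

lemma pnorm_neg (p : ℝ) {n : ℕ} (v : Fin n → ℝ) : pnorm p (-v) = pnorm p v := by
  simp [pnorm]

lemma pnorm_sub_comm (p : ℝ) {n : ℕ} (u v : Fin n → ℝ) : pnorm p (u - v) = pnorm p (v - u) := by
  rw [← pnorm_neg, neg_sub]

lemma pnorm_add_le {p : ℝ} (hp : 1 ≤ p) {n : ℕ} (u v : Fin n → ℝ) :
    pnorm p (u + v) ≤ pnorm p u + pnorm p v :=
  Real.Lp_add_le Finset.univ u v hp

lemma pnorm_sub_le_pnorm_sub_add_pnorm_sub {p : ℝ} (hp : 1 ≤ p) {n : ℕ} (u v w : Fin n → ℝ) :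
    pnorm p (u - w) ≤ pnorm p (u - v) + pnorm p (v - w) := by
  simpa only [sub_add_sub_cancel] using pnorm_add_le hp (u - v) (v - w)

theorem relative_error_transfer_general {n m k : ℕ} (A : Matrix (Fin n) (Fin m) ℝ)
    (b : Fin n → ℝ) (T : Matrix (Fin k) (Fin n) ℝ) (p ε Z : ℝ)
    (xc xhopt : Fin m → ℝ) (N : Set (Fin n → ℝ))
    (hp : 1 ≤ p) (hε : 0 < ε) (hε' : ε ≤ 1 / 7)
    (hT : ∀ x : Fin m → ℝ,
      (1 - ε) * pnorm p (A.mulVec x) ≤ pnorm p (T.mulVec (A.mulVec x)) ∧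
      pnorm p (T.mulVec (A.mulVec x)) ≤ (1 + ε) * pnorm p (A.mulVec x))
    (hN : ∀ y ∈ N, ∃ xε : Fin m → ℝ, y = A.mulVec xε ∧
      pnorm p (y - A.mulVec xc) ≤ 12 * Z)
    (hnear : ∃ y ∈ N, pnorm p (A.mulVec xhopt - y) ≤ ε * Z)
    (hnet : ∀ y ∈ N,
      pnorm p (T.mulVec (y - b)) ≤ (1 + 3 * ε) * Z →
      pnorm p (y - b) ≤ (1 + 6 * ε) * Z)
    (hTxhopt : pnorm p (T.mulVec (A.mulVec xhopt - b)) ≤ (1 + ε) * Z) :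
    pnorm p (A.mulVec xhopt - b) ≤ (1 + 7 * ε) * Z := by
  obtain ⟨y, hyN, hy⟩ := hnear
  obtain ⟨xε, rfl, -⟩ := hN y hyN
  have hZ : 0 ≤ Z := nonneg_of_mul_nonneg_right ((pnorm_nonneg p _).trans hy) hε
  have hTnear : pnorm p (T.mulVec (A.mulVec xε - A.mulVec xhopt)) ≤ (1 + ε) * (ε * Z) := by
    rw [← Matrix.mulVec_sub]
    refine (hT _).2.trans (mul_le_mul_of_nonneg_left ?_ (by linarith))
    rwa [Matrix.mulVec_sub, pnorm_sub_comm]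
  have hTy : pnorm p (T.mulVec (A.mulVec xε - b)) ≤ (1 + 3 * ε) * Z :=
    calc pnorm p (T.mulVec (A.mulVec xε - b))
        ≤ pnorm p (T.mulVec (A.mulVec xε - A.mulVec xhopt))
          + pnorm p (T.mulVec (A.mulVec xhopt - b)) := by
          simp only [Matrix.mulVec_sub]
          exact pnorm_sub_le_pnorm_sub_add_pnorm_sub hp _ _ _
      _ ≤ (1 + ε) * (ε * Z) + (1 + ε) * Z := add_le_add hTnear hTxhopt
      _ ≤ (1 + 3 * ε) * Z := by
          nlinarith [mul_nonneg (mul_nonneg hε.le (by linarith : 0 ≤ 1 - ε)) hZ]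
  calc pnorm p (A.mulVec xhopt - b)
      ≤ pnorm p (A.mulVec xhopt - A.mulVec xε) + pnorm p (A.mulVec xε - b) :=
        pnorm_sub_le_pnorm_sub_add_pnorm_sub hp _ _ _
    _ ≤ ε * Z + (1 + 6 * ε) * Z := add_le_add hy (hnet _ hyN hTy)
    _ = (1 + 7 * ε) * Z := by ring

/-- **Lemma 6: relative error transfers from the sampled problem to the original.**
Suppose `T` preserves `p`-norms of `A x` up to `1 ± ε`, `x̂_opt` lies within `12 Z` of
`A x̂_c`, and `N` is an ε-net (of points `A x_ε` within `12 Z` of `A x̂_c`) containing a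
point within `ε Z` of `A x̂_opt` on which the net implication holds.  If
`‖T (A x̂_opt - b)‖_p ≤ (1 + ε) Z` then `‖A x̂_opt - b‖_p ≤ (1 + 7ε) Z`. -/
theorem relative_error_transfer {n m k : ℕ} (A : Matrix (Fin n) (Fin m) ℝ)
    (b : Fin n → ℝ) (T : Matrix (Fin k) (Fin n) ℝ) (p ε Z : ℝ)
    (xc xhopt : Fin m → ℝ) (N : Set (Fin n → ℝ))
    (hp : 1 ≤ p) (hε : 0 < ε) (hε' : ε ≤ 1 / 7)
    (hZ : IsLeast {t : ℝ | ∃ x : Fin m → ℝ, t = pnorm p (A.mulVec x - b)} Z)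
    (hT : ∀ x : Fin m → ℝ,
      (1 - ε) * pnorm p (A.mulVec x) ≤ pnorm p (T.mulVec (A.mulVec x)) ∧
      pnorm p (T.mulVec (A.mulVec x)) ≤ (1 + ε) * pnorm p (A.mulVec x))
    (hball : pnorm p (A.mulVec xhopt - A.mulVec xc) ≤ 12 * Z)
    (hN : ∀ y ∈ N, ∃ xε : Fin m → ℝ, y = A.mulVec xε ∧
      pnorm p (y - A.mulVec xc) ≤ 12 * Z)
    (hnear : ∃ y ∈ N, pnorm p (A.mulVec xhopt - y) ≤ ε * Z)
    (hnet : ∀ y ∈ N,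
      pnorm p (T.mulVec (y - b)) ≤ (1 + 3 * ε) * Z →
      pnorm p (y - b) ≤ (1 + 6 * ε) * Z)
    (hTxhopt : pnorm p (T.mulVec (A.mulVec xhopt - b)) ≤ (1 + ε) * Z) :
    pnorm p (A.mulVec xhopt - b) ≤ (1 + 7 * ε) * Z :=
  relative_error_transfer_general A b T p ε Z xc xhopt N hp hε hε' hT hN hnear hnet hTxhopt
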